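/- Let Σ be a finite nonempty alphabet and let L ∈ LMO(Σ) be a language recognized by some MOn-1qfa over Σ with isolated cut-point. Then the syntactic monoid M(L) is a finite monoid which is R-trivial and a block-group. -/

import Mathlib

open Matrix

/-- A Measure-Only one-way quantum finite automaton (MOn-1qfa) over the alphabet `σ`
(the letter `none` plays the role of the end-marker `#`).  The data consists of:
the number of states `m`, for each letter `c` (and the end-marker) the number `k c`
of distinct eigenvalues of the observable `O_c`, the eigenvalues `eig c` themselves,
the corresponding orthogonal projectors `P c`, the initial (row) vector `init`,
and the set `F` of (indices of) accepting eigenvalues of the end-marker observable. -/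
structure MOnQFA (σ : Type) where
  m : ℕ
  k : Option σ → ℕ
  eig : (c : Option σ) → Fin (k c) → ℝ
  P : (c : Option σ) → Fin (k c) → Matrix (Fin m) (Fin m) ℂ
  init : Matrix (Fin 1) (Fin m) ℂ
  F : Finset (Fin (k none))

namespace MOnQFA

variable {σ : Type}

/-- Well-formedness of a MOn-1qfa: the eigenvalues of each observable are distinct,
the `P c j` are pairwise orthogonal Hermitian idempotents (orthogonal projectors)
summing to the identity (so that `O_c = ∑ j, eig c j • P c j` is a Hermitian matrix
with spectral decomposition given by the data), and the initial vector has norm 1. -/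
def Valid (A : MOnQFA σ) : Prop :=
  (∀ c, Function.Injective (A.eig c)) ∧
  (∀ c j, (A.P c j)ᴴ = A.P c j) ∧
  (∀ c j, A.P c j * A.P c j = A.P c j) ∧
  (∀ c j j', j ≠ j' → A.P c j * A.P c j' = 0) ∧
  (∀ c, ∑ j, A.P c j = 1) ∧
  (∑ i, Complex.normSq (A.init 0 i) = 1)

/-- The density matrix `σ(w)` reached after reading the word `w`:
`σ(ε) = π₀† π₀` and `σ(yc) = ∑ j, P_j(c) σ(y) P_j(c)`. -/
noncomputable def dens (A : MOnQFA σ) (w : List σ) : Matrix (Fin A.m) (Fin A.m) ℂ :=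
  w.foldl (fun ρ c => ∑ j, A.P (some c) j * ρ * A.P (some c) j) (A.initᴴ * A.init)

/-- The acceptance probability `p_A(w) = Tr (∑_{j ∈ F} P_j(#) σ(w) P_j(#))`. -/
noncomputable def prob (A : MOnQFA σ) (w : List σ) : ℝ :=
  (Matrix.trace (∑ j ∈ A.F, A.P none j * A.dens w * A.P none j)).re

end MOnQFA

/-- `LMO σ` : the class of languages recognized by some MOn-1qfa over `σ`
with an isolated cut-point. -/
def LMO (σ : Type) : Set (Set (List σ)) :=
  {L | ∃ A : MOnQFA σ, A.Valid ∧ ∃ lam δ : ℝ, 0 < lam ∧ 0 < δ ∧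
        (∀ w, |A.prob w - lam| ≥ δ) ∧ L = {w | A.prob w > lam}}

/-- `PMO σ` : the class of probabilistic events induced by MOn-1qfas over `σ`. -/
def PMO (σ : Type) : Set (List σ → ℝ) :=
  {φ | ∃ A : MOnQFA σ, A.Valid ∧ φ = A.prob}
/-- The syntactic congruence of a language `L` on the free monoid:
`x ∼_L y` iff for all contexts `a, b`, `a x b ∈ L ↔ a y b ∈ L`. -/
def synCon {σ : Type} (L : Set (FreeMonoid σ)) : Con (FreeMonoid σ) where
  r x y := ∀ a b : FreeMonoid σ, a * x * b ∈ L ↔ a * y * b ∈ L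
  iseqv :=
    ⟨fun _ _ _ => Iff.rfl, fun h a b => (h a b).symm, fun h₁ h₂ a b => (h₁ a b).trans (h₂ a b)⟩
  mul' := by
    intro w x y z hw hy a b
    have h1 : a * (w * y) * b ∈ L ↔ a * (x * y) * b ∈ L := by
      have := hw a (y * b); simpa [mul_assoc] using this
    have h2 : a * (x * y) * b ∈ L ↔ a * (x * z) * b ∈ L := by
      have := hy (a * x) b; simpa [mul_assoc] using this
    exact h1.trans h2

/-- The syntactic monoid `M(L) = Σ*/∼_L` of a language `L`. -/
def SynMonoid {σ : Type} (L : Set (FreeMonoid σ)) : Type := (synCon L).Quotient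

noncomputable instance {σ : Type} (L : Set (FreeMonoid σ)) : Monoid (SynMonoid L) :=
  inferInstanceAs (Monoid (synCon L).Quotient)

noncomputable instance {σ : Type} (L : Set (List σ)) : Monoid (SynMonoid (σ := σ) L) :=
  inferInstanceAs (Monoid (synCon (σ := σ) L).Quotient)

/-- A monoid is `J`-trivial if `M a M = M b M` implies `a = b`. -/
def IsJTrivial (M : Type*) [Monoid M] : Prop :=
  ∀ a b : M,
    (Set.range fun p : M × M => p.1 * a * p.2) = (Set.range fun p : M × M => p.1 * b * p.2) →
      a = b

/-- A monoid is `R`-trivial if `a M = b M` implies `a = b`. -/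
def IsRTrivial (M : Type*) [Monoid M] : Prop :=
  ∀ a b : M, (Set.range fun x => a * x) = (Set.range fun x => b * x) → a = b

/-- A monoid is a block-group if every `R`-class and every `L`-class contains at most
one idempotent. -/
def IsBlockGroup (M : Type*) [Monoid M] : Prop :=
  ∀ e f : M, IsIdempotentElem e → IsIdempotentElem f →
    (((Set.range fun x => e * x) = Set.range fun x => f * x) ∨
      ((Set.range fun x => x * e) = Set.range fun x => x * f)) → e = f


/-!
Reading a letter applies a measurement, which on density matrices (with the Hilbert–Schmidt
inner product) is an orthogonal projection. A word therefore acts by a product of orthogonal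
projections: a contraction that fixes every vector whose norm it preserves. Since the cut-point is
isolated, words whose operators are close are syntactically equivalent, so compactness of the unit
ball of operators makes the syntactic monoid finite. For two such contractions `A` and `B`, a
limit point `S` of the powers of `B * A` satisfies `A * S = S = S * B`; read back in the syntactic
monoid this yields, for suitable `n`, the identities `a (p q)ⁿ p = a (p q)ⁿ` and
`a (b a)ⁿ = b (a b)ⁿ`, which force `R`-triviality and the block-group property.
-/

open Filter Topology

section MonoidIdentities

variable {M : Type*} [Monoid M]

theorem mul_pow_eq_self_of_mul_eq_self {a b : M} (h : a * b = a) (n : ℕ) : a * b ^ n = a := by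
  induction n with
  | zero => rw [pow_zero, mul_one]
  | succ n ih => rw [pow_succ, ← mul_assoc, ih, h]

theorem pow_mul_eq_self_of_mul_eq_self {a b : M} (h : a * b = b) (n : ℕ) : a ^ n * b = b := by
  induction n with
  | zero => rw [pow_zero, one_mul]
  | succ n ih => rw [pow_succ', mul_assoc, ih, h]

theorem isRTrivial_of_exists_mul_pow_mul_eq
    (h : ∀ a p q : M, ∃ n : ℕ, a * (p * q) ^ n * p = a * (p * q) ^ n) : IsRTrivial M := by
  intro a b hab
  obtain ⟨v, hv : a * v = b⟩ : b ∈ Set.range (a * ·) := hab ▸ ⟨1, mul_one b⟩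
  obtain ⟨u, hu : b * u = a⟩ : a ∈ Set.range (b * ·) := hab ▸ ⟨1, mul_one a⟩
  have hvu : a * (v * u) = a := by rw [← mul_assoc, hv, hu]
  obtain ⟨n, hn⟩ := h a v u
  rw [← hv, ← mul_pow_eq_self_of_mul_eq_self hvu n, hn]

theorem isBlockGroup_of_exists_mul_pow_eq (hR : IsRTrivial M)
    (h : ∀ a b : M, ∃ n : ℕ, a * (b * a) ^ n = b * (a * b) ^ n) : IsBlockGroup M := by
  intro e f he hf hRL
  rcases hRL with hRe | hLe
  · exact hR e f hRe
  obtain ⟨u, hu : u * f = e⟩ : e ∈ Set.range (· * f) := hLe ▸ ⟨1, one_mul e⟩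
  obtain ⟨v, hv : v * e = f⟩ : f ∈ Set.range (· * e) := hLe ▸ ⟨1, one_mul f⟩
  have hfe : f * e = f := by rw [← hv, mul_assoc, he.eq]
  have hef : e * f = e := by rw [← hu, mul_assoc, hf.eq]
  obtain ⟨n, hn⟩ := h e f
  rwa [hfe, hef, mul_pow_eq_self_of_mul_eq_self hef, mul_pow_eq_self_of_mul_eq_self hfe] at hn

end MonoidIdentities

section Contractions

variable {𝕜 E : Type*} [NontriviallyNormedField 𝕜] [NormedAddCommGroup E] [NormedSpace 𝕜 E]

structure IsRigidContraction (T : E →L[𝕜] E) : Prop where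
  norm_le_one : ‖T‖ ≤ 1
  apply_eq_of_norm_eq : ∀ u, ‖T u‖ = ‖u‖ → T u = u

variable {A B S T : E →L[𝕜] E} {g : ℕ → ℕ}

theorem ContinuousLinearMap.norm_apply_le_of_norm_le_one (hT : ‖T‖ ≤ 1) (u : E) : ‖T u‖ ≤ ‖u‖ :=
  (T.le_opNorm u).trans (mul_le_of_le_one_left (norm_nonneg u) hT)

namespace IsRigidContraction

theorem norm_apply_le (hA : IsRigidContraction A) (u : E) : ‖A u‖ ≤ ‖u‖ :=
  A.norm_apply_le_of_norm_le_one hA.norm_le_one u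

theorem mul (hA : IsRigidContraction A) (hB : IsRigidContraction B) :
    IsRigidContraction (A * B) := by
  refine ⟨(norm_mul_le A B).trans (mul_le_one₀ hA.norm_le_one (norm_nonneg B) hB.norm_le_one),
    fun u hu => ?_⟩
  have hBu : ‖B u‖ = ‖u‖ :=
    le_antisymm (hB.norm_apply_le u) (hu ▸ hA.norm_apply_le (B u))
  rw [mul_apply_eq_comp, hB.apply_eq_of_norm_eq u hBu] at hu ⊢
  exact hA.apply_eq_of_norm_eq u hu

theorem one : IsRigidContraction (1 : E →L[𝕜] E) :=
  ⟨ContinuousLinearMap.norm_id_le, fun _ _ => rfl⟩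

theorem pow (hA : IsRigidContraction A) (n : ℕ) : IsRigidContraction (A ^ n) := by
  induction n with
  | zero => rw [pow_zero]; exact one
  | succ n ih => rw [pow_succ]; exact ih.mul hA

end IsRigidContraction

/-- Along a subsequence of powers of a contraction, `‖T ^ n z‖` decreases to a limit that is
attained both by `S z` and by `T (S z)`. -/
theorem norm_apply_eq_of_tendsto_pow (hT : ‖T‖ ≤ 1) (hg : Tendsto g atTop atTop)
    (hS : Tendsto (fun k => T ^ g k) atTop (𝓝 S)) (z : E) : ‖T (S z)‖ = ‖S z‖ := by
  have hz : Tendsto (fun k => (T ^ g k) z) atTop (𝓝 (S z)) :=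
    ((ContinuousLinearMap.apply 𝕜 E z).continuous.tendsto S).comp hS
  have hanti : Antitone fun n => ‖(T ^ n) z‖ := antitone_nat_of_succ_le fun n => by
    rw [pow_succ', mul_apply_eq_comp]
    exact T.norm_apply_le_of_norm_le_one hT _
  have hr := tendsto_atTop_ciInf hanti ⟨0, by rintro _ ⟨n, rfl⟩; positivity⟩
  have hSz : Tendsto (fun k => ‖(T ^ g k) z‖) atTop (𝓝 ‖S z‖) := hz.norm
  have hTSz : Tendsto (fun k => ‖(T ^ (g k + 1)) z‖) atTop (𝓝 ‖T (S z)‖) := by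
    simp_rw [pow_succ', mul_apply_eq_comp]
    exact ((T.continuous.tendsto _).comp hz).norm
  rw [tendsto_nhds_unique hSz (hr.comp hg),
    tendsto_nhds_unique hTSz (hr.comp ((tendsto_add_atTop_nat 1).comp hg))]

theorem IsRigidContraction.mul_eq_of_tendsto_pow (hA : IsRigidContraction A) (hB : ‖B‖ ≤ 1)
    (hg : Tendsto g atTop atTop) (hS : Tendsto (fun k => (B * A) ^ g k) atTop (𝓝 S)) :
    A * S = S := by
  have hBA : ‖B * A‖ ≤ 1 :=
    (norm_mul_le B A).trans (mul_le_one₀ hB (norm_nonneg A) hA.norm_le_one)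
  ext1 z
  refine hA.apply_eq_of_norm_eq _ (le_antisymm (hA.norm_apply_le _) ?_)
  calc ‖S z‖ = ‖B (A (S z))‖ := (norm_apply_eq_of_tendsto_pow hBA hg hS z).symm
    _ ≤ ‖A (S z)‖ := B.norm_apply_le_of_norm_le_one hB _

theorem isIdempotentElem_of_tendsto_pow (hTS : T * S = S)
    (hS : Tendsto (fun k => T ^ g k) atTop (𝓝 S)) : IsIdempotentElem S := by
  have h := hS.mul_const S
  simp_rw [pow_mul_eq_self_of_mul_eq_self hTS] at h
  exact tendsto_nhds_unique h tendsto_const_nhds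

end Contractions

section Adjoints

variable {𝕜 E : Type*} [RCLike 𝕜] [NormedAddCommGroup E] [InnerProductSpace 𝕜 E]
  [CompleteSpace E] {B S T : E →L[𝕜] E}

open ContinuousLinearMap

theorem IsStarProjection.isRigidContraction (hp : IsStarProjection T) :
    IsRigidContraction T := by
  obtain ⟨K, _, rfl⟩ := isStarProjection_iff_eq_starProjection.mp hp
  exact ⟨K.starProjection_norm_le, fun u hu =>
    K.starProjection_eq_self_iff.mpr ((K.mem_iff_norm_starProjection u).mpr hu)⟩

/-- `‖T† u - u‖² = ‖T† u‖² - ‖u‖² ≤ 0`, because `⟪T† u, u⟫ = ⟪u, T u⟫ = ‖u‖²`. -/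
theorem ContinuousLinearMap.adjoint_apply_eq_self (hT : ‖T‖ ≤ 1) {u : E} (hu : T u = u) :
    adjoint T u = u := by
  have hinner : RCLike.re (inner 𝕜 (adjoint T u) u) = ‖u‖ ^ 2 := by
    rw [adjoint_inner_left, hu, inner_self_eq_norm_sq]
  have hle : ‖adjoint T u‖ ≤ ‖u‖ :=
    (adjoint T).norm_apply_le_of_norm_le_one ((adjoint.norm_map T).trans_le hT) u
  have hsq : ‖adjoint T u - u‖ ^ 2 ≤ 0 := by
    rw [@norm_sub_sq 𝕜, hinner]
    nlinarith [norm_nonneg (adjoint T u)]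
  rw [← sub_eq_zero, ← norm_eq_zero]
  nlinarith [norm_nonneg (adjoint T u - u)]

theorem isSelfAdjoint_of_isIdempotentElem_of_norm_le_one (hS : IsIdempotentElem S)
    (h : ‖S‖ ≤ 1) : IsSelfAdjoint S := by
  have hSS : star S * S = S := by
    ext1 u
    exact S.adjoint_apply_eq_self h (congrArg (· u) hS.eq)
  calc star S = star (star S * S) := by rw [hSS]
    _ = S := by rw [star_mul, star_star, hSS]

theorem IsSelfAdjoint.mul_eq_self_of_mul_eq_self (hS : IsSelfAdjoint S) (hB : ‖B‖ ≤ 1)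
    (h : B * S = S) : S * B = S := by
  have hBS : star B * S = S := by
    ext1 u
    exact B.adjoint_apply_eq_self hB (congrArg (· u) h)
  calc S * B = star (star B * star S) := by rw [star_mul, star_star, star_star]
    _ = S := by rw [hS.star_eq, hBS, hS.star_eq]

end Adjoints

section FiniteDimensional

variable {𝕜 E : Type*} [RCLike 𝕜] [NormedAddCommGroup E]

theorem exists_subseq_tendsto_pow [NormedSpace 𝕜 E] [FiniteDimensional 𝕜 E] {T : E →L[𝕜] E}
    (hT : ∀ n, ‖T ^ n‖ ≤ 1) :
    ∃ S : E →L[𝕜] E, ‖S‖ ≤ 1 ∧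
      ∃ g : ℕ → ℕ, StrictMono g ∧ Tendsto (fun k => T ^ g k) atTop (𝓝 S) := by
  have := FiniteDimensional.proper 𝕜 (E →L[𝕜] E)
  obtain ⟨S, hS, g, hg, hlim⟩ := (isCompact_closedBall (0 : E →L[𝕜] E) 1).tendsto_subseq
    fun n => mem_closedBall_zero_iff.mpr (hT n)
  exact ⟨S, mem_closedBall_zero_iff.mp hS, g, hg, hlim⟩

variable [InnerProductSpace 𝕜 E] [FiniteDimensional 𝕜 E] {A B : E →L[𝕜] E}

namespace IsRigidContraction

/-- `S` is the orthogonal projection onto the common fixed space of `A` and `B`. -/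
theorem exists_tendsto_pow_mul (hA : IsRigidContraction A) (hB : IsRigidContraction B) :
    ∃ (S : E →L[𝕜] E) (g : ℕ → ℕ), Tendsto g atTop atTop ∧
      Tendsto (fun k => (B * A) ^ g k) atTop (𝓝 S) ∧ A * S = S ∧ S * B = S := by
  obtain ⟨S, hS, g, hg, hlim⟩ := exists_subseq_tendsto_pow fun n => ((hB.mul hA).pow n).norm_le_one
  have hg := hg.tendsto_atTop
  have hAS : A * S = S := hA.mul_eq_of_tendsto_pow hB.norm_le_one hg hlim
  have hBAS : B * A * S = S :=
    (hB.mul hA).mul_eq_of_tendsto_pow (B := 1) ContinuousLinearMap.norm_id_le hg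
      (by simpa only [one_mul] using hlim)
  have hBS : B * S = S := by
    calc B * S = B * (A * S) := by rw [hAS]
      _ = S := by rw [← mul_assoc, hBAS]
  have := FiniteDimensional.complete 𝕜 E
  have hS_adj := isSelfAdjoint_of_isIdempotentElem_of_norm_le_one
    (isIdempotentElem_of_tendsto_pow hBAS hlim) hS
  exact ⟨S, g, hg, hlim, hAS, hS_adj.mul_eq_self_of_mul_eq_self hB.norm_le_one hBS⟩

theorem exists_norm_mul_pow_sub_pow_lt (hA : IsRigidContraction A) (hB : IsRigidContraction B)
    {ε : ℝ} (hε : 0 < ε) : ∃ n : ℕ, ‖A * (B * A) ^ n - (B * A) ^ n‖ < ε := by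
  obtain ⟨S, g, -, hlim, hAS, -⟩ := hA.exists_tendsto_pow_mul hB
  have h := (hlim.const_mul A).sub hlim
  rw [hAS, sub_self] at h
  obtain ⟨k, hk⟩ := (NormedAddGroup.tendsto_nhds_zero.mp h ε hε).exists
  exact ⟨g k, hk⟩

theorem exists_norm_mul_pow_sub_pow_mul_lt (hA : IsRigidContraction A)
    (hB : IsRigidContraction B) {ε : ℝ} (hε : 0 < ε) :
    ∃ n : ℕ, ‖A * (B * A) ^ n - (B * A) ^ n * B‖ < ε := by
  obtain ⟨S, g, -, hlim, hAS, hSB⟩ := hA.exists_tendsto_pow_mul hB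
  have h := (hlim.const_mul A).sub (hlim.mul_const B)
  rw [hAS, hSB, sub_self] at h
  obtain ⟨k, hk⟩ := (NormedAddGroup.tendsto_nhds_zero.mp h ε hε).exists
  exact ⟨g k, hk⟩

end IsRigidContraction

end FiniteDimensional

theorem Con.finite_quotient_of_dist_lt {M X : Type*} [Mul M] [PseudoMetricSpace X] {c : Con M}
    {f : M → X} {s : Set X} (hs : TotallyBounded s) (hf : ∀ x, f x ∈ s) {ε : ℝ} (hε : 0 < ε)
    (hc : ∀ x y, dist (f x) (f y) < ε → c x y) : Finite c.Quotient := by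
  obtain ⟨t, ht, hcover⟩ := Metric.totallyBounded_iff.mp hs (ε / 2) (half_pos hε)
  choose y hy hdist using fun q : c.Quotient => Set.mem_iUnion₂.mp (hcover (hf (Quotient.out q)))
  have := ht.to_subtype
  refine Finite.of_injective (fun q => (⟨y q, hy q⟩ : t)) fun q q' hqq' => ?_
  rw [← Quotient.out_eq q, ← Quotient.out_eq q']
  refine Quotient.sound (hc _ _ ?_)
  have h' := hdist q'
  rw [← Subtype.mk.inj hqq'] at h'
  linarith [dist_triangle_right (f (Quotient.out q)) (f (Quotient.out q')) (y q),
    Metric.mem_ball.mp (hdist q), Metric.mem_ball.mp h']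

section Representation

variable {𝕜 E M : Type*} [RCLike 𝕜] [NormedAddCommGroup E] [Monoid M] {c : Con M} {ε : ℝ}

theorem Con.finite_quotient_of_norm_sub_lt [NormedSpace 𝕜 E] [FiniteDimensional 𝕜 E]
    {ρ : M →* (E →L[𝕜] E)ᵐᵒᵖ} (hρ : ∀ x, ‖(ρ x).unop‖ ≤ 1) (hε : 0 < ε)
    (hc : ∀ x y, ‖(ρ x).unop - (ρ y).unop‖ < ε → c x y) : Finite c.Quotient := by
  have := FiniteDimensional.proper 𝕜 (E →L[𝕜] E)
  exact Con.finite_quotient_of_dist_lt (isCompact_closedBall 0 1).totallyBounded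
    (fun x => mem_closedBall_zero_iff.mpr (hρ x)) hε
    fun x y h => hc x y (by rwa [dist_eq_norm] at h)

variable [InnerProductSpace 𝕜 E] [FiniteDimensional 𝕜 E] {ρ : M →* (E →L[𝕜] E)ᵐᵒᵖ}

theorem Con.exists_mul_pow_mul_eq (hρ : ∀ x, IsRigidContraction (ρ x).unop) (hε : 0 < ε)
    (hc : ∀ x y, ‖(ρ x).unop - (ρ y).unop‖ < ε → c x y) (a p q : c.Quotient) :
    ∃ n : ℕ, a * (p * q) ^ n * p = a * (p * q) ^ n := by
  obtain ⟨a, rfl⟩ := c.mk'_surjective a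
  obtain ⟨p, rfl⟩ := c.mk'_surjective p
  obtain ⟨q, rfl⟩ := c.mk'_surjective q
  obtain ⟨n, hn⟩ := (hρ p).exists_norm_mul_pow_sub_pow_lt (hρ q) hε
  refine ⟨n, ?_⟩
  simp only [← map_mul, ← map_pow]
  refine c.eq.mpr (hc _ _ ?_)
  simp only [map_mul, map_pow, MulOpposite.unop_mul, MulOpposite.unop_pow]
  rw [← mul_assoc, ← sub_mul]
  exact (norm_mul_le _ _).trans_lt
    ((mul_le_of_le_one_right (norm_nonneg _) (hρ a).norm_le_one).trans_lt hn)

theorem Con.exists_mul_pow_eq (hρ : ∀ x, IsRigidContraction (ρ x).unop) (hε : 0 < ε)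
    (hc : ∀ x y, ‖(ρ x).unop - (ρ y).unop‖ < ε → c x y) (a b : c.Quotient) :
    ∃ n : ℕ, a * (b * a) ^ n = b * (a * b) ^ n := by
  obtain ⟨a, rfl⟩ := c.mk'_surjective a
  obtain ⟨b, rfl⟩ := c.mk'_surjective b
  obtain ⟨n, hn⟩ := (hρ a).exists_norm_mul_pow_sub_pow_mul_lt (hρ b) hε
  refine ⟨n, ?_⟩
  simp only [← map_mul, ← map_pow]
  refine c.eq.mpr (hc _ _ ?_)
  simpa only [map_mul, map_pow, MulOpposite.unop_mul, MulOpposite.unop_pow, mul_pow_mul] using hn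

end Representation

theorem lt_iff_lt_of_abs_sub_lt {s t lam δ : ℝ} (hs : δ ≤ |s - lam|) (ht : δ ≤ |t - lam|)
    (hst : |s - t| < 2 * δ) : lam < s ↔ lam < t := by
  rw [le_abs] at hs ht
  rw [abs_sub_lt_iff] at hst
  constructor <;> intro h <;> rcases hs with hs | hs <;> rcases ht with ht | ht <;> linarith

/-- Square matrices as a Hilbert space: the Euclidean structure on the entries is the
Hilbert–Schmidt inner product `⟪X, Y⟫ = tr (Xᴴ Y)`. -/
def Matrix.entryEquiv (n : Type*) [Fintype n] : Matrix n n ℂ ≃ₗ[ℂ] EuclideanSpace ℂ (n × n) where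
  toFun X := WithLp.toLp 2 fun p => X p.1 p.2
  invFun v i j := v (i, j)
  map_add' _ _ := rfl
  map_smul' _ _ := rfl
  left_inv _ := rfl
  right_inv _ := rfl

theorem Matrix.entryEquiv_apply {n : Type*} [Fintype n] (X : Matrix n n ℂ) (p : n × n) :
    entryEquiv n X p = X p.1 p.2 := rfl

theorem Matrix.inner_entryEquiv {n : Type*} [Fintype n] (X Y : Matrix n n ℂ) :
    inner ℂ (entryEquiv n X) (entryEquiv n Y) = trace (Xᴴ * Y) := by
  simp [PiLp.inner_apply, trace, Fintype.sum_prod_type_right, mul_apply, entryEquiv_apply,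
    mul_comm]

namespace MOnQFA

variable {σ : Type} (A : MOnQFA σ)

/-- Density matrices in Hilbert–Schmidt coordinates. -/
abbrev StateSpace : Type := EuclideanSpace ℂ (Fin A.m × Fin A.m)

/-- `X ↦ ∑ j, P_j(c) X P_j(c)`: the update of the density matrix on reading `c`. -/
def measurement (c : Option σ) :
    Matrix (Fin A.m) (Fin A.m) ℂ →ₗ[ℂ] Matrix (Fin A.m) (Fin A.m) ℂ :=
  ∑ j, LinearMap.mulRight ℂ (A.P c j) ∘ₗ LinearMap.mulLeft ℂ (A.P c j)

noncomputable def letterOp (c : Option σ) : A.StateSpace →L[ℂ] A.StateSpace :=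
  LinearMap.toContinuousLinearMap ((Matrix.entryEquiv (Fin A.m)).conj (A.measurement c))

/-- Into the opposite monoid, since the first letter of a word acts first. -/
noncomputable def wordOp : FreeMonoid σ →* (A.StateSpace →L[ℂ] A.StateSpace)ᵐᵒᵖ :=
  FreeMonoid.lift fun c => .op (A.letterOp (some c))

noncomputable def initState : A.StateSpace := Matrix.entryEquiv (Fin A.m) (A.initᴴ * A.init)

noncomputable def acceptance : A.StateSpace →L[ℂ] ℂ :=
  LinearMap.toContinuousLinearMap <|
    Matrix.traceLinearMap (Fin A.m) ℂ ℂ ∘ₗ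
      (∑ j ∈ A.F, LinearMap.mulRight ℂ (A.P none j) ∘ₗ LinearMap.mulLeft ℂ (A.P none j)) ∘ₗ
        (Matrix.entryEquiv (Fin A.m)).symm.toLinearMap

variable {A}

theorem measurement_apply (c : Option σ) (X : Matrix (Fin A.m) (Fin A.m) ℂ) :
    A.measurement c X = ∑ j, A.P c j * X * A.P c j := by
  simp [measurement]

theorem measurement_measurement (hA : A.Valid) (c : Option σ) (X : Matrix (Fin A.m) (Fin A.m) ℂ) :
    A.measurement c (A.measurement c X) = A.measurement c X := by
  obtain ⟨-, -, hidem, horth, -, -⟩ := hA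
  simp only [measurement_apply, Finset.mul_sum, Finset.sum_mul]
  refine Finset.sum_congr rfl fun j _ => ?_
  rw [Finset.sum_eq_single_of_mem j (Finset.mem_univ j) fun k _ hk => ?_]
  · rw [show A.P c j * (A.P c j * X * A.P c j) * A.P c j
      = (A.P c j * A.P c j) * X * (A.P c j * A.P c j) by noncomm_ring, hidem c j]
  · rw [show A.P c j * (A.P c k * X * A.P c k) * A.P c j
      = (A.P c j * A.P c k) * X * (A.P c k * A.P c j) by noncomm_ring,
      horth c j k (Ne.symm hk), horth c k j hk, zero_mul, zero_mul]

theorem trace_conjTranspose_measurement_mul (hA : A.Valid) (c : Option σ)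
    (X Y : Matrix (Fin A.m) (Fin A.m) ℂ) :
    Matrix.trace ((A.measurement c X)ᴴ * Y) = Matrix.trace (Xᴴ * A.measurement c Y) := by
  obtain ⟨-, hherm, -, -, -, -⟩ := hA
  simp only [measurement_apply, Matrix.conjTranspose_sum, Finset.sum_mul, Finset.mul_sum,
    Matrix.trace_sum, Matrix.conjTranspose_mul, hherm]
  refine Finset.sum_congr rfl fun j _ => ?_
  rw [Matrix.trace_mul_cycle (A := A.P c j) (B := Xᴴ * A.P c j) (C := Y), Matrix.trace_mul_cycle]
  noncomm_ring

theorem letterOp_entryEquiv (c : Option σ) (X : Matrix (Fin A.m) (Fin A.m) ℂ) :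
    A.letterOp c (Matrix.entryEquiv (Fin A.m) X) =
      Matrix.entryEquiv (Fin A.m) (A.measurement c X) := by
  simp [letterOp, LinearEquiv.conj_apply]

theorem isStarProjection_letterOp (hA : A.Valid) (c : Option σ) :
    IsStarProjection (A.letterOp c) := by
  have hsurj := (Matrix.entryEquiv (Fin A.m)).surjective
  refine ⟨ContinuousLinearMap.ext fun u => ?_, ?_⟩
  · obtain ⟨X, rfl⟩ := hsurj u
    rw [mul_apply_eq_comp, letterOp_entryEquiv, letterOp_entryEquiv,
      measurement_measurement hA]
  · refine ContinuousLinearMap.isSelfAdjoint_iff_isSymmetric.mpr fun u v => ?_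
    obtain ⟨X, rfl⟩ := hsurj u
    obtain ⟨Y, rfl⟩ := hsurj v
    simp only [ContinuousLinearMap.coe_coe, letterOp_entryEquiv, Matrix.inner_entryEquiv,
      trace_conjTranspose_measurement_mul hA]

theorem isRigidContraction_wordOp (hA : A.Valid) (w : FreeMonoid σ) :
    IsRigidContraction (A.wordOp w).unop := by
  induction w using FreeMonoid.inductionOn' with
  | one => rw [map_one, MulOpposite.unop_one]; exact .one
  | of_mul c w ih =>
    rw [map_mul, MulOpposite.unop_mul]
    exact ih.mul (isStarProjection_letterOp hA (some c)).isRigidContraction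

theorem entryEquiv_dens (w : List σ) :
    Matrix.entryEquiv (Fin A.m) (A.dens w) = (A.wordOp (FreeMonoid.ofList w)).unop A.initState := by
  rw [dens, initState]
  generalize A.initᴴ * A.init = ρ
  induction w generalizing ρ with
  | nil => rfl
  | cons c w ih =>
    rw [List.foldl_cons, FreeMonoid.ofList_cons, map_mul, MulOpposite.unop_mul, mul_apply_eq_comp,
      wordOp, FreeMonoid.lift_eval_of, MulOpposite.unop_op, letterOp_entryEquiv, ← wordOp, ← ih,
      measurement_apply]

theorem prob_eq (w : List σ) :
    A.prob w = (A.acceptance ((A.wordOp (FreeMonoid.ofList w)).unop A.initState)).re := by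
  rw [prob, ← entryEquiv_dens]
  simp [acceptance]

theorem abs_prob_sub_le (hA : A.Valid) (a x y b : FreeMonoid σ) :
    |A.prob (a * x * b).toList - A.prob (a * y * b).toList| ≤
      ‖A.acceptance‖ * ‖A.initState‖ * ‖(A.wordOp x).unop - (A.wordOp y).unop‖ := by
  have hρ := isRigidContraction_wordOp hA
  set D := (A.wordOp x).unop - (A.wordOp y).unop
  set v := (A.wordOp a).unop A.initState
  have hdiff : A.prob (a * x * b).toList - A.prob (a * y * b).toList =
      (A.acceptance ((A.wordOp b).unop (D v))).re := by
    simp only [prob_eq, FreeMonoid.ofList_toList, map_mul, MulOpposite.unop_mul,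
      mul_apply_eq_comp, D, v, _root_.sub_apply, map_sub, Complex.sub_re]
  rw [hdiff]
  calc _ ≤ ‖A.acceptance ((A.wordOp b).unop (D v))‖ := Complex.abs_re_le_norm _
    _ ≤ ‖A.acceptance‖ * ‖D v‖ :=
      (A.acceptance.le_opNorm _).trans (by gcongr; exact (hρ b).norm_apply_le _)
    _ ≤ ‖A.acceptance‖ * (‖D‖ * ‖A.initState‖) := by
      gcongr
      exact (D.le_opNorm v).trans (by gcongr; exact (hρ a).norm_apply_le _)
    _ = _ := by ring

theorem exists_synCon_of_norm_sub_lt (hA : A.Valid) {lam δ : ℝ} (hδ : 0 < δ)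
    (hiso : ∀ w, |A.prob w - lam| ≥ δ) :
    ∃ ε > 0, ∀ x y : FreeMonoid σ,
      ‖(A.wordOp x).unop - (A.wordOp y).unop‖ < ε → synCon {w | A.prob w > lam} x y := by
  set C := ‖A.acceptance‖ * ‖A.initState‖
  refine ⟨2 * δ / (C + 1), by positivity, fun x y hxy a b => ?_⟩
  have hlt : C * ‖(A.wordOp x).unop - (A.wordOp y).unop‖ < 2 * δ := by
    rw [lt_div_iff₀ (by positivity)] at hxy
    nlinarith [norm_nonneg ((A.wordOp x).unop - (A.wordOp y).unop)]
  exact lt_iff_lt_of_abs_sub_lt (hiso _) (hiso _) ((abs_prob_sub_le hA a x y b).trans_lt hlt)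

end MOnQFA

theorem synMonoid_rTrivial_blockGroup_of_lmo
    (σ : Type) (L : Set (List σ)) (hL : L ∈ LMO σ) :
    Finite (SynMonoid (σ := σ) L) ∧ IsRTrivial (SynMonoid (σ := σ) L) ∧
      IsBlockGroup (SynMonoid (σ := σ) L) := by
  obtain ⟨A, hA, lam, δ, -, hδ, hiso, rfl⟩ := hL
  obtain ⟨ε, hε, hsep⟩ := A.exists_synCon_of_norm_sub_lt hA hδ hiso
  have hρ := A.isRigidContraction_wordOp hA
  have hR : IsRTrivial (SynMonoid (σ := σ) {w | A.prob w > lam}) :=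
    isRTrivial_of_exists_mul_pow_mul_eq (Con.exists_mul_pow_mul_eq hρ hε hsep)
  exact ⟨Con.finite_quotient_of_norm_sub_lt (fun w => (hρ w).norm_le_one) hε hsep, hR,
    isBlockGroup_of_exists_mul_pow_eq hR (Con.exists_mul_pow_eq hρ hε hsep)⟩
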